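/- arXiv:1303.1889 — 3 statements merged into one kernel-verified Lean document; each statement's English description precedes it below -/
import Mathlib

section
/- The number of monomials $\xi_1^{i_1}\xi_2^{i_2}\cdots\xi_n^{i_n}$ with nonnegative integer exponents satisfying $i_1+\cdots+i_k \le k$ for all $k \le n$ and $i_1+\cdots+i_n = n$ equals the $n$-th Catalan number $C(n) = \frac{1}{n+1}\binom{2n}{n}$. -/
/-!
The exponent vector `(i₁, …, iₙ)` is sent to the word `U D^{i₁} U D^{i₂} ⋯ U D^{iₙ}`. This is
injective, and every word not starting with `D` arises this way. After the `k`-th block the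
word has `k` letters `U` and `i₁ + ⋯ + i_k` letters `D`, and since the `D`-surplus only grows
inside a block, the prefix condition of Dyck words amounts to `i₁ + ⋯ + i_k ≤ k`. So the
vectors are in bijection with the Dyck words of semilength `n`, of which there are `C(n)`.
-/

open List DyckStep

def dyckStepsOf : List ℕ → List DyckStep
  | [] => []
  | a :: l => U :: (replicate a D ++ dyckStepsOf l)

@[simp] lemma dyckStepsOf_nil : dyckStepsOf [] = [] := rfl

@[simp] lemma dyckStepsOf_cons (a : ℕ) (l : List ℕ) :
    dyckStepsOf (a :: l) = U :: (replicate a D ++ dyckStepsOf l) := rfl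

@[simp] lemma dyckStepsOf_append (l₁ l₂ : List ℕ) :
    dyckStepsOf (l₁ ++ l₂) = dyckStepsOf l₁ ++ dyckStepsOf l₂ := by
  induction l₁ with
  | nil => rfl
  | cons a l ih => simp [ih]

@[simp] lemma count_U_dyckStepsOf (l : List ℕ) : (dyckStepsOf l).count U = l.length := by
  induction l with
  | nil => rfl
  | cons a l ih => simp [ih, count_replicate]

@[simp] lemma count_D_dyckStepsOf (l : List ℕ) : (dyckStepsOf l).count D = l.sum := by
  induction l with
  | nil => rfl
  | cons a l ih => simp [ih]

lemma head?_dyckStepsOf_ne_D (l : List ℕ) : (dyckStepsOf l).head? ≠ some D := by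
  cases l <;> simp

lemma List.replicate_append_inj {α : Type*} {x : α} {a b : ℕ} {u v : List α}
    (hu : u.head? ≠ some x) (hv : v.head? ≠ some x)
    (h : replicate a x ++ u = replicate b x ++ v) : a = b ∧ u = v := by
  induction a generalizing b with
  | zero =>
    cases b with
    | zero => simpa using h
    | succ b => subst h; simp [replicate_succ] at hu
  | succ a ih =>
    cases b with
    | zero => subst h; simp [replicate_succ] at hv
    | succ b =>
      simp only [replicate_succ, cons_append, cons.injEq, true_and] at h
      simpa using ih h

lemma dyckStepsOf_injective : Function.Injective dyckStepsOf := by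
  intro l l' h
  induction l generalizing l' with
  | nil => cases l' <;> simp_all
  | cons a l ih =>
    cases l' with
    | nil => simp at h
    | cons a' l' =>
      simp only [dyckStepsOf_cons, cons.injEq, true_and] at h
      obtain ⟨rfl, hl⟩ := replicate_append_inj (head?_dyckStepsOf_ne_D l)
        (head?_dyckStepsOf_ne_D l') h
      rw [ih hl]

lemma exists_dyckStepsOf_eq {w : List DyckStep} (hw : w.head? ≠ some D) :
    ∃ l, dyckStepsOf l = w := by
  induction w using List.reverseRecOn with
  | nil => exact ⟨[], rfl⟩
  | append_singleton w s ih =>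
    obtain rfl | hne := eq_or_ne w []
    · cases s
      · exact ⟨[0], rfl⟩
      · simp at hw
    obtain ⟨l, rfl⟩ := ih (by rwa [head?_append_of_ne_nil _ hne] at hw)
    cases s with
    | U => exact ⟨l ++ [0], by simp⟩
    | D =>
      obtain ⟨l, a, rfl⟩ := (eq_nil_or_concat l).resolve_left (by rintro rfl; simp at hne)
      exact ⟨l ++ [a + 1], by simp [replicate_succ']⟩

-- `c` is the surplus of `U`s over `D`s accumulated before the word.
lemma count_D_take_dyckStepsOf_le {l : List ℕ} {c : ℕ} (h : ∀ k, (l.take k).sum ≤ k + c)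
    (j : ℕ) : ((dyckStepsOf l).take j).count D ≤ ((dyckStepsOf l).take j).count U + c := by
  induction l generalizing c j with
  | nil => simp
  | cons a l ih =>
    have ha : a ≤ 1 + c := by simpa using h 1
    have hl : ∀ k, (l.take k).sum ≤ k + (1 + c - a) := fun k => by
      have := h (k + 1)
      simp only [take_succ_cons, sum_cons] at this
      omega
    cases j with
    | zero => simp
    | succ m =>
      have := ih hl (m - a)
      simp [take_append, count_replicate]
      omega

lemma sum_take_le_of_count_D_take_le {l : List ℕ}
    (h : ∀ j, ((dyckStepsOf l).take j).count D ≤ ((dyckStepsOf l).take j).count U) (k : ℕ) :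
    (l.take k).sum ≤ k := by
  have hprefix :
      (dyckStepsOf l).take (dyckStepsOf (l.take k)).length = dyckStepsOf (l.take k) := by
    calc (dyckStepsOf l).take _
        = (dyckStepsOf (l.take k) ++ dyckStepsOf (l.drop k)).take _ := by
          rw [← dyckStepsOf_append, take_append_drop]
      _ = dyckStepsOf (l.take k) := take_left
  have := h (dyckStepsOf (l.take k)).length
  rw [hprefix, count_D_dyckStepsOf, count_U_dyckStepsOf] at this
  exact this.trans (length_take_le k l)

lemma DyckWord.head?_ne_D (p : DyckWord) : p.toList.head? ≠ some D := by
  cases h : p.toList with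
  | nil => simp
  | cons s w =>
    have := p.head_eq_U (by simp [h])
    simp only [h, head_cons] at this
    simp [this]

def ballotLists (n : ℕ) : Set (List ℕ) :=
  {l | l.length = n ∧ l.sum = n ∧ ∀ k, (l.take k).sum ≤ k}

lemma image_dyckStepsOf_ballotLists (n : ℕ) :
    dyckStepsOf '' ballotLists n = DyckWord.toList '' {p | p.semilength = n} := by
  ext w
  constructor
  · rintro ⟨l, ⟨hlen, hsum, hl⟩, rfl⟩
    refine ⟨⟨dyckStepsOf l, by simp [hlen, hsum], count_D_take_dyckStepsOf_le (c := 0) hl⟩,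
      ?_, rfl⟩
    simp [DyckWord.semilength, hlen]
  · rintro ⟨p, hp, rfl⟩
    obtain ⟨l, hl⟩ := exists_dyckStepsOf_eq p.head?_ne_D
    refine ⟨l, ⟨?_, ?_, sum_take_le_of_count_D_take_le (hl ▸ p.count_D_le_count_U)⟩, hl⟩
    · rw [← count_U_dyckStepsOf, hl]; exact hp
    · rw [← count_D_dyckStepsOf, hl, ← p.count_U_eq_count_D]; exact hp

lemma DyckWord.ncard_semilength_eq (n : ℕ) :
    {p : DyckWord | p.semilength = n}.ncard = catalan n := by
  rw [← Nat.card_coe_set_eq, Set.coe_ofPred, Nat.card_eq_fintype_card,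
    DyckWord.card_dyckWord_semilength_eq_catalan]

lemma ballotLists_subset_range_ofFn (n : ℕ) : ballotLists n ⊆ Set.range (ofFn (n := n)) := by
  rintro l ⟨rfl, -⟩
  exact ⟨fun j => l[j], ofFn_getElem⟩

lemma preimage_ofFn_ballotLists (n : ℕ) :
    ofFn ⁻¹' ballotLists n = {i : Fin n → ℕ |
        (∀ k ≤ n, ∑ j ∈ Finset.univ.filter (fun j : Fin n => (j : ℕ) < k), i j ≤ k) ∧
        (∑ j, i j = n)} := by
  ext i
  simp only [ballotLists, Set.mem_preimage, Set.mem_ofPred_eq, length_ofFn, sum_ofFn,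
    sum_take_ofFn, true_and]
  refine ⟨fun ⟨hsum, hle⟩ => ⟨fun k _ => hle k, hsum⟩, fun ⟨hle, hsum⟩ => ⟨hsum, fun k => ?_⟩⟩
  rcases le_or_gt k n with hk | hk
  · exact hle k hk
  · calc ∑ j ∈ Finset.univ.filter (fun j : Fin n => (j : ℕ) < k), i j
        ≤ ∑ j, i j := Finset.sum_le_sum_of_subset (Finset.filter_subset _ _)
      _ ≤ k := hsum.trans_le hk.le

theorem catalan_count_monomials_general (n : ℕ) :
    {i : Fin n → ℕ |
        (∀ k ≤ n, ∑ j ∈ Finset.univ.filter (fun j : Fin n => (j : ℕ) < k), i j ≤ k) ∧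
        (∑ j, i j = n)}.ncard = catalan n := by
  rw [← preimage_ofFn_ballotLists]
  calc (ofFn ⁻¹' ballotLists n).ncard
      = (ofFn '' (ofFn ⁻¹' ballotLists n)).ncard :=
        (Set.ncard_image_of_injective _ ofFn_injective).symm
    _ = (dyckStepsOf '' ballotLists n).ncard := by
      rw [Set.image_preimage_eq_of_subset (ballotLists_subset_range_ofFn n),
        Set.ncard_image_of_injective _ dyckStepsOf_injective]
    _ = {p : DyckWord | p.semilength = n}.ncard := by
      rw [image_dyckStepsOf_ballotLists, Set.ncard_image_of_injective _ fun _ _ => DyckWord.ext]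
    _ = catalan n := DyckWord.ncard_semilength_eq n

/-- The number of tuples `(i₁,…,iₙ)` of nonnegative integers satisfying
`i₁+⋯+i_k ≤ k` for all `k ≤ n` and `i₁+⋯+i_n = n` equals the `n`-th Catalan number. -/
theorem catalan_count_monomials (n : ℕ) (hn : 0 < n) :
    {i : Fin n → ℕ |
        (∀ k ≤ n, ∑ j ∈ Finset.univ.filter (fun j : Fin n => (j : ℕ) < k), i j ≤ k) ∧
        (∑ j, i j = n)}.ncard = catalan n :=
  catalan_count_monomials_general n
end

section
/- The number of tuples $(i_1,\ldots,i_n)$ of nonnegative integers satisfying $i_1+\cdots+i_k \le k$ for all $1 \le k \le n$ (with no constraint that the total sum equals $n$) equals the $(n+1)$-st Catalan number $C(n+1)=\frac{1}{n+2}\binom{2n+2}{n+1}$. -/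
/-!
Allow a slack `c`: let `D n c` count the tuples with `i₁ + ⋯ + i_k ≤ k + c` for all `k`.
Splitting off the first entry `t ≤ c + 1` leaves a tuple of length `n - 1` with slack
`c + 1 - t`, so `D 0 c = 1` and `D (n + 1) c = ∑_{u ≤ c + 1} D n u`. Pascal's rule shows that
the ballot numbers `(2n+c+1 choose n) - (2n+c+1 choose n+c+2)` satisfy the same recursion,
and at `c = 0` this is `C(n + 1)`.
-/

open Finset

def ballotSet (n c : ℕ) : Set (Fin n → ℕ) :=
  {i | ∀ k, 1 ≤ k → k ≤ n → ∑ j ∈ univ.filter (fun j : Fin n => (j : ℕ) < k), i j ≤ k + c}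

theorem sum_filter_val_lt_succ {n : ℕ} (i : Fin (n + 1) → ℕ) (k : ℕ) :
    ∑ j ∈ univ.filter (fun j : Fin (n + 1) => (j : ℕ) < k + 1), i j
      = i 0 + ∑ j ∈ univ.filter (fun j : Fin n => (j : ℕ) < k), Fin.tail i j := by
  simp [Finset.sum_filter, Fin.sum_univ_succ, Fin.tail]

theorem ballotSet_zero (c : ℕ) : ballotSet 0 c = Set.univ :=
  Set.eq_univ_of_forall fun _ k hk hk0 => absurd hk (by omega)

theorem cons_mem_ballotSet_iff {n c t : ℕ} {j : Fin n → ℕ} :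
    (Fin.cons t j : Fin (n + 1) → ℕ) ∈ ballotSet (n + 1) c
      ↔ t ≤ c + 1 ∧ j ∈ ballotSet n (c + 1 - t) := by
  constructor
  · intro h
    have hk : ∀ k ≤ n, t + ∑ i ∈ univ.filter (fun i : Fin n => (i : ℕ) < k), j i ≤ k + 1 + c :=
      fun k hk => by
        have := h (k + 1) (by omega) (by omega)
        rwa [sum_filter_val_lt_succ] at this
    have ht : t ≤ c + 1 := by
      have := hk 0 (Nat.zero_le n)
      simp only [Nat.not_lt_zero, filter_false, sum_empty] at this
      omega
    exact ⟨ht, fun k hk1 hkn => by have := hk k hkn; omega⟩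
  · rintro ⟨ht, hj⟩ k hk hkn
    obtain ⟨k, rfl⟩ : ∃ k', k = k' + 1 := ⟨k - 1, by omega⟩
    rw [sum_filter_val_lt_succ]
    simp only [Fin.cons_zero, Fin.tail_cons]
    rcases Nat.eq_zero_or_pos k with rfl | hk
    · simp only [Nat.not_lt_zero, filter_false, sum_empty]
      omega
    · have := hj k hk (by omega)
      omega

theorem ballotSet_finite (n c : ℕ) : (ballotSet n c).Finite := by
  refine (Set.Finite.pi fun _ : Fin n => Set.finite_Iic (n + c)).subset fun i hi j _ => ?_
  have hj : i j ≤ ∑ j' ∈ univ.filter (fun j' : Fin n => (j' : ℕ) < j + 1), i j' :=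
    single_le_sum (fun _ _ => Nat.zero_le _) (by simp)
  have := hi (j + 1) (by omega) j.isLt
  simp only [Set.mem_Iic]
  omega

def ballotSetSuccEquiv (n c : ℕ) :
    ballotSet (n + 1) c ≃ Σ t : Fin (c + 2), ballotSet n (c + 1 - t) where
  toFun i :=
    have h := (cons_mem_ballotSet_iff (t := i.1 0) (j := Fin.tail i.1)).1
      (by rw [Fin.cons_self_tail]; exact i.2)
    ⟨⟨i.1 0, by omega⟩, ⟨Fin.tail i.1, h.2⟩⟩
  invFun p := ⟨Fin.cons p.1.1 p.2.1, cons_mem_ballotSet_iff.2 ⟨by omega, p.2.2⟩⟩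
  left_inv i := Subtype.ext (Fin.cons_self_tail i.1)
  right_inv _ := rfl

theorem ncard_ballotSet_zero (c : ℕ) : (ballotSet 0 c).ncard = 1 := by
  simp [ballotSet_zero]

theorem ncard_ballotSet_succ (n c : ℕ) :
    (ballotSet (n + 1) c).ncard = ∑ u ∈ range (c + 2), (ballotSet n u).ncard := by
  have : ∀ t, Finite (ballotSet n t) := fun t => (ballotSet_finite n t).to_subtype
  rw [← Nat.card_coe_set_eq, Nat.card_congr (ballotSetSuccEquiv n c), Nat.card_sigma,
    ← sum_range_reflect]
  simp only [Nat.card_coe_set_eq]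
  rw [← Fin.sum_univ_eq_sum_range (fun u => (ballotSet n (c + 2 - 1 - u)).ncard)]
  rfl

theorem add_choose_eq_of_ballot_recursion {f : ℕ → ℕ → ℕ} (h0 : ∀ c, f 0 c = 1)
    (hsucc : ∀ n c, f (n + 1) c = ∑ u ∈ range (c + 2), f n u) (n c : ℕ) :
    f n c + (2 * n + c + 1).choose (n + c + 2) = (2 * n + c + 1).choose n := by
  induction n generalizing c with
  | zero => simp [h0]
  | succ n ih =>
    suffices key : ∀ c, ∑ u ∈ range (c + 2), f n u + (2 * n + c + 3).choose (n + c + 3)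
        = (2 * n + c + 3).choose (n + 1) by
      rw [hsucc, show 2 * (n + 1) + c + 1 = 2 * n + c + 3 by ring,
        show n + 1 + c + 2 = n + c + 3 by ring]
      exact key c
    intro c
    induction c with
    | zero =>
      have ih0 := ih 0
      have ih1 := ih 1
      have p1 := Nat.choose_succ_succ' (2 * n + 2) (n + 2)
      have p2 := Nat.choose_succ_succ' (2 * n + 1) (n + 1)
      have p3 := Nat.choose_succ_succ' (2 * n + 2) n
      have p4 := Nat.choose_succ_succ' (2 * n + 1) n
      simp only [sum_range_succ, sum_range_zero]
      ring_nf at ih0 ih1 p1 p2 p3 p4 ⊢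
      omega
    | succ c ihc =>
      have ih2 := ih (c + 2)
      have p1 := Nat.choose_succ_succ' (2 * n + c + 3) (n + c + 3)
      have p2 := Nat.choose_succ_succ' (2 * n + c + 3) n
      rw [sum_range_succ]
      ring_nf at ih2 p1 p2 ihc ⊢
      omega

theorem catalan_add_choose_succ (m : ℕ) :
    catalan m + (2 * m).choose (m + 1) = (2 * m).choose m := by
  have h1 := succ_mul_catalan_eq_centralBinom m
  have h2 := Nat.choose_succ_right_eq (2 * m) m
  rw [Nat.centralBinom_eq_two_mul_choose] at h1
  rw [show 2 * m - m = m by omega] at h2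
  apply Nat.eq_of_mul_eq_mul_left m.succ_pos
  nlinarith

theorem catalan_count_ballot_tuples_general (n : ℕ) :
    {i : Fin n → ℕ |
        ∀ k, 1 ≤ k → k ≤ n →
          ∑ j ∈ Finset.univ.filter (fun j : Fin n => (j : ℕ) < k), i j ≤ k}.ncard
      = catalan (n + 1) := by
  have hcount := add_choose_eq_of_ballot_recursion (f := fun n c => (ballotSet n c).ncard)
    ncard_ballotSet_zero ncard_ballotSet_succ n 0
  have hcat := catalan_add_choose_succ (n + 1)
  have p1 := Nat.choose_succ_succ' (2 * n + 1) (n + 1)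
  have p2 := Nat.choose_succ_succ' (2 * n + 1) n
  change (ballotSet n 0).ncard = _
  ring_nf at hcount hcat p1 p2 ⊢
  omega

/-- The number of tuples `(i₁,…,iₙ)` of nonnegative integers satisfying
`i₁+⋯+i_k ≤ k` for all `1 ≤ k ≤ n` (with no constraint on the total sum)
equals the `(n+1)`-st Catalan number. -/
theorem catalan_count_ballot_tuples (n : ℕ) (hn : 0 < n) :
    {i : Fin n → ℕ |
        ∀ k, 1 ≤ k → k ≤ n →
          ∑ j ∈ Finset.univ.filter (fun j : Fin n => (j : ℕ) < k), i j ≤ k}.ncard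
      = catalan (n + 1) :=
  catalan_count_ballot_tuples_general n
end

section
/- Let $R = k[\zeta_1,\ldots,\zeta_N; \xi_1,\ldots,\xi_N]$ be the free graded-commutative algebra over a field $k$ of characteristic zero with odd generators $\zeta_i$ of degree 1 and even generators $\xi_i$ of degree 2, and let $I$ be the ideal generated by all monomials $\xi_1^{i_1}\cdots\xi_k^{i_k}$ with $i_1+\cdots+i_k > k$ for some $1 \le k \le N$. Consider the differential $d = \sum_{i=1}^N \xi_i \partial/\partial \zeta_i$ on $R/I$. Then the cohomology of $(R/I, d)$ has a basis given by the classes of monomials $\zeta_{\alpha_1}\cdots\zeta_{\alpha_s}\,\xi_1^{i_1}\cdots\xi_{\alpha_s}^{i_{\alpha_s}}$ with $1 \le \alpha_1 < \cdots < \alpha_s \le N$, $i_1+\cdots+i_k \le k$ for all $k \le \alpha_s$, and $i_1+\cdots+i_{\alpha_s} = \alpha_s$, together with the class of $1$. -/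
open Finset
open scoped Classical

variable (k : Type*) [Field k] [CharZero k]

/-- A monomial `ζ_S · ξ^e` in the free graded-commutative algebra
`k[ζ₁,…,ζ_N; ξ₁,…,ξ_N]` (odd `ζ`'s of degree 1, even `ξ`'s of degree 2). -/
abbrev WMon (N : ℕ) := Finset (Fin N) × (Fin N → ℕ)

/-- A `ξ`-exponent vector lies in the monomial ideal `I` generated by the
`ξ₁^{i₁}⋯ξ_K^{i_K}` with `i₁+⋯+i_K > K` iff some initial partial sum exceeds
its index. -/
def badXi {N : ℕ} (e : Fin N → ℕ) : Prop :=
  ∃ K : ℕ, 1 ≤ K ∧ K ≤ N ∧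
    K < ∑ j ∈ Finset.univ.filter (fun j : Fin N => (j : ℕ) < K), e j

/-- Monomials surviving in the quotient `R/I`. -/
abbrev GoodMon (N : ℕ) := {m : WMon N // ¬ badXi m.2}

/-- The quotient `R/I` as a vector space, with basis the surviving monomials. -/
abbrev WModule (N : ℕ) := GoodMon N →₀ k

/-- Value of the differential `d = Σ ξᵢ ∂/∂ζᵢ` on a basis monomial of `R/I`. -/
noncomputable def weylDMon {N : ℕ} (m : GoodMon N) : WModule k N :=
  ∑ a ∈ m.1.1,
    ((-1 : k) ^ ((m.1.1.filter (fun b => b < a)).card)) •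
      (if h : ¬ badXi (Function.update m.1.2 a (m.1.2 a + 1)) then
        Finsupp.single (⟨(m.1.1.erase a, Function.update m.1.2 a (m.1.2 a + 1)), h⟩ :
          GoodMon N) (1 : k)
      else 0)

/-- The differential `d = Σᵢ ξᵢ ∂/∂ζᵢ` on `R/I`. -/
noncomputable def weylD (N : ℕ) : WModule k N →ₗ[k] WModule k N :=
  Finsupp.lsum k (fun m => LinearMap.toSpanSingleton k (WModule k N) (weylDMon k m))

/-- The monomials `ζ_{α₁}⋯ζ_{α_s} ξ₁^{i₁}⋯ξ_{α_s}^{i_{α_s}}` (1-indexed in the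
paper; here 0-indexed, `α_s = max S`) with `i₁+⋯+i_k ≤ k` for all `k ≤ α_s` and
`i₁+⋯+i_{α_s} = α_s`, together with the monomial `1`. -/
def isCocycleMon {N : ℕ} (m : WMon N) : Prop :=
  (m.1 = ∅ ∧ m.2 = 0) ∨
  (∃ h : m.1.Nonempty,
    (∀ j : Fin N, m.1.max' h < j → m.2 j = 0) ∧
    (∀ K : ℕ, K ≤ (m.1.max' h : ℕ) + 1 →
      ∑ j ∈ Finset.univ.filter (fun j : Fin N => (j : ℕ) < K), m.2 j ≤ K) ∧
    (∑ j ∈ Finset.univ.filter (fun j : Fin N => (j : ℕ) ≤ (m.1.max' h : ℕ)), m.2 j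
      = (m.1.max' h : ℕ) + 1))

noncomputable instance weylKerHasQuotient (N : ℕ) :
    HasQuotient ↥(LinearMap.ker (weylD k N))
      (Submodule k ↥(LinearMap.ker (weylD k N))) :=
  Submodule.hasQuotient (R := k) (M := ↥(LinearMap.ker (weylD k N)))

/-- The cohomology `ker d / (im d ∩ ker d)` of `(R/I, d)`. -/
noncomputable abbrev WeylCohomology (N : ℕ) :=
  ↥(LinearMap.ker (weylD k N)) ⧸
    ((LinearMap.range (weylD k N) ⊓ LinearMap.ker (weylD k N)).comap
      (LinearMap.ker (weylD k N)).subtype)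

/-!
For a monomial `ζ_S ξ^e` let `a` be the largest index of a variable occurring in it, and let `h`
send it to `ζ_a ζ_S ξ^e / ξ_a` (zero if `ζ_a` occurs in `ζ_S`).
Then `P = 1 - dh - hd` commutes with `d`, fixes the listed cocycles, and maps every monomial into
their span: if `ζ_a` occurs and the monomial is not listed, `P` kills it; otherwise the terms of
`dh` and `hd` cancel in pairs, except where the truncation `I` kills a term of `hd`, and the
surviving term of `dh` is then one of the listed cocycles. So the listed cocycles span a retract
of the complex that maps isomorphically onto its cohomology.
-/

theorem Function.update_add_eq_add_single {ι M : Type*} [DecidableEq ι] [AddZeroClass M]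
    (f : ι → M) (a : ι) (x : M) : Function.update f a (f a + x) = f + Pi.single a x := by
  ext j
  rcases eq_or_ne j a with rfl | h <;> simp [*]

theorem Finset.sum_sum_erase_eq_zero_of_antisymm {α M : Type*} [DecidableEq α] [AddCommGroup M]
    (s : Finset α) (f : α → α → M) (hf : ∀ a ∈ s, ∀ b ∈ s, a ≠ b → f a b = -f b a) :
    ∑ a ∈ s, ∑ b ∈ s.erase a, f a b = 0 := by
  rw [Finset.sum_sigma']
  refine Finset.sum_involution (fun p _ => ⟨p.2, p.1⟩) (fun p hp => ?_) (fun p hp _ => ?_)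
    (fun p hp => ?_) (fun p _ => rfl)
  all_goals obtain ⟨ha, hb⟩ := Finset.mem_sigma.1 hp; obtain ⟨hne, hb⟩ := Finset.mem_erase.1 hb
  · rw [hf _ ha _ hb hne.symm, neg_add_cancel]
  · exact fun h => hne (congrArg Sigma.fst h)
  · exact Finset.mem_sigma.2 ⟨hb, Finset.mem_erase.2 ⟨hne.symm, ha⟩⟩

/-- `P = 1 - dh - hd` commutes with `d` and is the identity modulo boundaries on cocycles, so
`x ↦ P x` identifies `ker d / im d` with `span R (range f)`. -/
theorem exists_basis_homology_of_homotopy_retract {R V ι : Type*} [Ring R] [AddCommGroup V]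
    [Module R V] {d h : V →ₗ[R] V} {f : ι → V} (hdd : ∀ x, d (d x) = 0)
    (hf : LinearIndependent R f) (hfd : ∀ i, d (f i) = 0) (hfh : ∀ i, d (h (f i)) = 0)
    (hP : ∀ x, x - d (h x) - h (d x) ∈ Submodule.span R (Set.range f)) :
    ∃ b : Module.Basis ι R (LinearMap.ker d ⧸
        (LinearMap.range d ⊓ LinearMap.ker d).comap (LinearMap.ker d).subtype),
      ∀ i, b i = Submodule.Quotient.mk ⟨f i, hfd i⟩ := by
  set C := Submodule.span R (Set.range f)
  set P : V →ₗ[R] V := LinearMap.id - d ∘ₗ h - h ∘ₗ d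
  have hPx : ∀ x, P x = x - d (h x) - h (d x) := fun x => rfl
  have hCd : C ≤ LinearMap.ker d := Submodule.span_le.2 (Set.range_subset_iff.2 hfd)
  have hPC : ∀ c ∈ C, P c = c := by
    intro c hc
    induction hc using Submodule.span_induction with
    | mem x hx =>
      obtain ⟨i, rfl⟩ := hx
      rw [hPx, hfh, hfd, map_zero, sub_zero, sub_zero]
    | zero => exact map_zero P
    | add x y _ _ hx hy => rw [map_add, hx, hy]
    | smul a x _ hx => rw [map_smul, hx]
  have hPd : ∀ x, P (d x) = d (P x) := by
    intro x
    rw [hPx, hPx, hdd, map_zero, map_sub, map_sub, hdd]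
    abel
  let π : LinearMap.ker d →ₗ[R] C := (LinearMap.codRestrict C P hP).comp (LinearMap.ker d).subtype
  have hπ : Function.Surjective π := fun c => ⟨⟨c, hCd c.2⟩, Subtype.ext (hPC c c.2)⟩
  have hker : LinearMap.ker π =
      (LinearMap.range d ⊓ LinearMap.ker d).comap (LinearMap.ker d).subtype := by
    ext ⟨x, hx⟩
    rw [LinearMap.mem_ker] at hx
    simp only [LinearMap.mem_ker, Submodule.mem_comap, Submodule.subtype_apply, Submodule.mem_inf,
      LinearMap.mem_range, hx, and_true]
    constructor
    · intro h0
      refine ⟨h x, ?_⟩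
      have : P x = 0 := congrArg Subtype.val h0
      rw [hPx, hx, map_zero, sub_zero, sub_eq_zero] at this
      exact this.symm
    · rintro ⟨y, rfl⟩
      exact Subtype.ext ((hPd y).trans (hCd (hP y)))
  let e := (Submodule.quotEquivOfEq _ _ hker).symm.trans (π.quotKerEquivOfSurjective hπ)
  refine ⟨(Module.Basis.span hf).map e.symm, fun i => ?_⟩
  rw [Module.Basis.map_apply, LinearEquiv.symm_apply_eq, Module.Basis.span_apply]
  exact Subtype.ext (hPC _ (Submodule.subset_span ⟨i, rfl⟩)).symm

namespace WeylTruncated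

variable {N : ℕ} {S : Finset (Fin N)} {e e' u : Fin N → ℕ} {a b b' j : Fin N} {n n' : ℕ}

def prefixSum (e : Fin N → ℕ) (n : ℕ) : ℕ :=
  ∑ j ∈ Finset.univ.filter (fun j : Fin N => (j : ℕ) < n), e j

theorem not_badXi_iff : ¬badXi e ↔ ∀ n, 1 ≤ n → n ≤ N → prefixSum e n ≤ n := by
  simp only [badXi, prefixSum, not_exists, not_and, not_lt]

theorem badXi_mono (hle : e ≤ e') (h : badXi e) : badXi e' :=
  let ⟨n, h1, h2, h3⟩ := h
  ⟨n, h1, h2, h3.trans_le (Finset.sum_le_sum fun j _ => hle j)⟩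

theorem prefixSum_add_single (e : Fin N → ℕ) (a : Fin N) (n : ℕ) :
    prefixSum (e + Pi.single a 1) n = prefixSum e n + if (a : ℕ) < n then 1 else 0 := by
  simp [prefixSum, Finset.sum_add_distrib, Finset.sum_pi_single']

theorem prefixSum_eq_of_le (hsupp : ∀ j : Fin N, n ≤ j → e j = 0) (hn : n ≤ n') :
    prefixSum e n' = prefixSum e n := by
  refine (Finset.sum_subset (fun j => ?_) fun j hj hjn => hsupp j ?_).symm
  · simp only [Finset.mem_filter, Finset.mem_univ, true_and]
    omega
  · simp only [Finset.mem_filter, Finset.mem_univ, true_and] at hj hjn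
    omega

def pivots (S : Finset (Fin N)) (e : Fin N → ℕ) : Finset (Fin N) :=
  S ∪ Finset.univ.filter (e · ≠ 0)

theorem mem_pivots : j ∈ pivots S e ↔ j ∈ S ∨ e j ≠ 0 := by
  simp [pivots]

theorem pivots_erase_add_single (hb : b ∈ S) :
    pivots (S.erase b) (e + Pi.single b 1) = pivots S e := by
  ext j
  rcases eq_or_ne j b with rfl | hj
  · simp [mem_pivots, hb]
  · simp [mem_pivots, hj]

theorem pivots_insert (S : Finset (Fin N)) (e : Fin N → ℕ) (a : Fin N) :
    pivots (insert a S) e = pivots S (e + Pi.single a 1) := by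
  ext j
  rcases eq_or_ne j a with rfl | hj
  · simp [mem_pivots]
  · simp [mem_pivots, hj]

def IsPivot (S : Finset (Fin N)) (e : Fin N → ℕ) (a : Fin N) : Prop :=
  IsGreatest (pivots S e : Set (Fin N)) a

theorem IsPivot.le_of_mem (ha : IsPivot S e a) (hj : j ∈ S) : j ≤ a :=
  ha.2 (mem_pivots.2 (Or.inl hj))

theorem IsPivot.eq_zero_of_lt (ha : IsPivot S e a) (hj : a < j) : e j = 0 :=
  by_contra fun h => (ha.2 (mem_pivots.2 (Or.inr h))).not_gt hj

theorem exists_isPivot (h : (pivots S e).Nonempty) : ∃ a, IsPivot S e a :=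
  ⟨_, Finset.isGreatest_max' _ h⟩

theorem IsPivot.erase_add_single (ha : IsPivot S e a) (hb : b ∈ S) :
    IsPivot (S.erase b) (e + Pi.single b 1) a := by
  rwa [IsPivot, pivots_erase_add_single hb]

theorem IsPivot.prefixSum_eq (ha : IsPivot S e a) (hn : a + 1 ≤ n) :
    prefixSum e n = prefixSum e (a + 1) :=
  prefixSum_eq_of_le (fun _ hj => ha.eq_zero_of_lt (Fin.lt_def.2 hj)) hn

theorem prefixSum_succ_le (hgood : ¬badXi e) (a : Fin N) : prefixSum e (a + 1) ≤ a + 1 :=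
  not_badXi_iff.1 hgood _ (Nat.le_add_left 1 a) a.isLt

theorem isCocycleMon_of_pivots_eq_empty (h : pivots S e = ∅) : isCocycleMon (S, e) := by
  refine Or.inl ⟨?_, funext fun j => ?_⟩
  · exact Finset.subset_empty.1 (h ▸ Finset.subset_union_left)
  · by_contra hj
    simpa [h] using (mem_pivots (S := S)).2 (Or.inr hj)

theorem isCocycleMon_iff (hgood : ¬badXi e) (ha : IsPivot S e a) :
    isCocycleMon (S, e) ↔ a ∈ S ∧ prefixSum e (a + 1) = a + 1 := by
  have hsum : ∀ M : ℕ, ∑ j ∈ Finset.univ.filter (fun j : Fin N => (j : ℕ) ≤ M), e j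
      = prefixSum e (M + 1) := fun M => by simp only [prefixSum, Nat.lt_succ_iff]
  constructor
  · rintro (⟨rfl, rfl⟩ | ⟨hne, hsupp, _, htot⟩)
    · simpa [mem_pivots] using ha.1
    · have hM : S.max' hne = a := by
        refine le_antisymm (ha.le_of_mem (S.max'_mem hne)) ?_
        rcases mem_pivots.1 ha.1 with haS | hea
        · exact S.le_max' a haS
        · exact not_lt.1 fun h => hea (hsupp a h)
      exact ⟨hM ▸ S.max'_mem hne, hM ▸ hsum _ ▸ htot⟩
  · rintro ⟨haS, htot⟩
    have hM : S.max' ⟨a, haS⟩ = a :=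
      le_antisymm (ha.le_of_mem (S.max'_mem _)) (S.le_max' a haS)
    refine Or.inr ⟨⟨a, haS⟩, fun j hj => ha.eq_zero_of_lt (hM ▸ hj), fun n hn => ?_, ?_⟩
    · rcases Nat.eq_zero_or_pos n with rfl | hn0
      · simp
      · exact not_badXi_iff.1 hgood n hn0 (hM ▸ hn |>.trans a.isLt)
    · rw [hM, hsum, htot]

theorem exists_eq_add_single (h : e a ≠ 0) : ∃ u : Fin N → ℕ, e = u + Pi.single a 1 := by
  refine ⟨e - Pi.single a 1, funext fun j => ?_⟩
  rcases eq_or_ne j a with rfl | hj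
  · simp only [Pi.add_apply, Pi.sub_apply, Pi.single_eq_same]
    omega
  · simp [hj]

theorem not_badXi_add_single_of_not_isCocycleMon (hgood : ¬badXi e) (ha : IsPivot S e a)
    (haS : a ∈ S) (hc : ¬isCocycleMon (S, e)) : ¬badXi (e + Pi.single a 1) := by
  have hlt : prefixSum e (a + 1) < a + 1 := lt_of_le_of_ne (prefixSum_succ_le hgood a)
    fun h => hc ((isCocycleMon_iff hgood ha).2 ⟨haS, h⟩)
  refine not_badXi_iff.2 fun n hn1 hnN => ?_
  rw [prefixSum_add_single]
  split_ifs with han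
  · rw [ha.prefixSum_eq han]
    omega
  · exact not_badXi_iff.1 hgood n hn1 hnN

-- The prefix bound that `u + ξ_b + ξ_a` violates, at some `n`, forces `a < n`, and then
-- `u` has prefix sum exactly `a` up to `a`.
theorem isCocycleMon_insert_erase (hgood : ¬badXi (u + Pi.single a 1))
    (ha : IsPivot S (u + Pi.single a 1) a) (haS : a ∉ S) (hb : b ∈ S)
    (hbad : badXi (u + Pi.single b 1 + Pi.single a 1)) (hgood' : ¬badXi (u + Pi.single b 1)) :
    isCocycleMon (insert a (S.erase b), u + Pi.single b 1) := by
  have hba : b < a := lt_of_le_of_ne (ha.le_of_mem hb) fun h => haS (h ▸ hb)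
  have hpiv : IsPivot (insert a (S.erase b)) (u + Pi.single b 1) a := by
    rw [IsPivot, pivots_insert, add_right_comm, pivots_erase_add_single hb]
    exact ha
  refine (isCocycleMon_iff hgood' hpiv).2 ⟨Finset.mem_insert_self _ _, ?_⟩
  obtain ⟨n, hn1, hnN, hn⟩ := hbad
  have h1 := not_badXi_iff.1 hgood n hn1 hnN
  have h2 := not_badXi_iff.1 hgood' n hn1 hnN
  have h3 := prefixSum_succ_le hgood a
  change n < prefixSum _ n at hn
  simp only [prefixSum_add_single] at hn h1 h2 h3 ⊢
  have han : (a : ℕ) < n := by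
    by_contra han
    split_ifs at hn h1 h2 <;> omega
  have h4 := ha.prefixSum_eq (Nat.succ_le_of_lt han)
  simp only [prefixSum_add_single, if_pos han, if_pos (Nat.lt_succ_self (a : ℕ))] at h1 h3 h4 ⊢
  rw [if_pos (Nat.lt_succ_of_lt hba)]
  split_ifs at hn h2 <;> omega

section Homotopy

variable (R : Type*) [CommRing R]

def koszulSign (S : Finset (Fin N)) (a : Fin N) : R :=
  (-1) ^ #{b ∈ S | b < a}

/-- The class of `ζ_S ξ^e` in `R/I`. -/
noncomputable def monClass (S : Finset (Fin N)) (e : Fin N → ℕ) : GoodMon N →₀ R :=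
  if h : ¬badXi e then Finsupp.single ⟨(S, e), h⟩ 1 else 0

/-- `ζ_S ξ^e ↦ ζ_a ζ_S ξ^e / ξ_a` for the largest variable `a` of the monomial; the sign
reorders `ζ_a ζ_S` increasingly. -/
noncomputable def homotopyMon (S : Finset (Fin N)) (e : Fin N → ℕ) : GoodMon N →₀ R :=
  if hT : (pivots S e).Nonempty then
    if (pivots S e).max' hT ∈ S then 0
    else (-1 : R) ^ #S • monClass R (insert ((pivots S e).max' hT) S)
      (e - Pi.single ((pivots S e).max' hT) 1)
  else 0

noncomputable def weylH (N : ℕ) : (GoodMon N →₀ R) →ₗ[R] GoodMon N →₀ R :=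
  Finsupp.linearCombination R fun m => homotopyMon R m.1.1 m.1.2

noncomputable def cocycleSpan (N : ℕ) : Submodule R (GoodMon N →₀ R) :=
  Submodule.span R (Set.range fun x : {m : GoodMon N // isCocycleMon m.1} =>
    Finsupp.single x.1 (1 : R))

variable {R}

theorem koszulSign_insert_of_lt (h : b < a) : koszulSign R (insert a S) b = koszulSign R S b := by
  rw [koszulSign, Finset.filter_insert, if_neg (not_lt.2 h.le), koszulSign]

theorem koszulSign_insert_self (h : ∀ j ∈ S, j < a) : koszulSign R (insert a S) a = (-1) ^ #S := by
  rw [koszulSign, Finset.filter_insert, if_neg (lt_irrefl a), Finset.filter_true_of_mem h]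

theorem koszulSign_of_forall_le (ha : a ∈ S) (hmax : ∀ j ∈ S, j ≤ a) :
    koszulSign R S a = (-1) ^ #(S.erase a) := by
  conv_lhs => rw [← Finset.insert_erase ha]
  exact koszulSign_insert_self fun j hj => lt_of_le_of_ne (hmax j (Finset.mem_of_mem_erase hj))
    (Finset.ne_of_mem_erase hj)

theorem koszulSign_erase_of_lt (hb : b ∈ S) (h : b < b') :
    koszulSign R (S.erase b) b' = -koszulSign R S b' := by
  rw [koszulSign, koszulSign, Finset.filter_erase, ← Finset.card_erase_add_one
    (Finset.mem_filter.2 ⟨hb, h⟩), pow_succ, mul_neg_one, neg_neg]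

theorem koszulSign_erase_of_gt (h : b < b') : koszulSign R (S.erase b') b = koszulSign R S b := by
  rw [koszulSign, koszulSign, Finset.filter_erase,
    Finset.erase_eq_of_notMem fun h' => (Finset.mem_filter.1 h').2.not_gt h]

theorem koszulSign_mul_koszulSign_erase (hb : b ∈ S) (hb' : b' ∈ S) (hne : b ≠ b') :
    koszulSign R S b * koszulSign R (S.erase b) b' =
      -(koszulSign R S b' * koszulSign R (S.erase b') b) := by
  wlog hlt : b < b' generalizing b b'
  · rw [this hb' hb hne.symm (lt_of_le_of_ne (not_lt.1 hlt) hne.symm), neg_neg]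
  rw [koszulSign_erase_of_lt hb hlt, koszulSign_erase_of_gt hlt]
  ring

theorem monClass_val (m : GoodMon N) : monClass R m.1.1 m.1.2 = Finsupp.single m 1 :=
  dif_pos m.2

theorem monClass_of_badXi (h : badXi e) : monClass R S e = 0 :=
  dif_neg (not_not.2 h)

theorem monClass_mem_cocycleSpan (h : ¬badXi e → isCocycleMon (S, e)) :
    monClass R S e ∈ cocycleSpan R N := by
  by_cases he : badXi e
  · rw [monClass_of_badXi he]
    exact zero_mem _
  · exact Submodule.subset_span ⟨⟨⟨(S, e), he⟩, h he⟩, (monClass_val ⟨(S, e), he⟩).symm⟩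

theorem homotopyMon_of_mem (ha : IsPivot S e a) (haS : a ∈ S) : homotopyMon R S e = 0 := by
  have hT : (pivots S e).Nonempty := ⟨a, ha.1⟩
  rw [homotopyMon, dif_pos hT, if_pos ((Finset.isGreatest_max' _ hT).unique ha ▸ haS)]

theorem homotopyMon_add_single (ha : IsPivot S (e + Pi.single a 1) a) (haS : a ∉ S) :
    homotopyMon R S (e + Pi.single a 1) = (-1 : R) ^ #S • monClass R (insert a S) e := by
  have hT : (pivots S (e + Pi.single a 1)).Nonempty := ⟨a, ha.1⟩
  rw [homotopyMon, dif_pos hT, (Finset.isGreatest_max' _ hT).unique ha, if_neg haS,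
    add_tsub_cancel_right]

theorem weylH_monClass_of_not_badXi (h : ¬badXi e) :
    weylH R N (monClass R S e) = homotopyMon R S e := by
  rw [monClass, dif_pos h, weylH, Finsupp.linearCombination_single, one_smul]

theorem weylH_monClass_of_mem (ha : IsPivot S e a) (haS : a ∈ S) :
    weylH R N (monClass R S e) = 0 := by
  by_cases h : badXi e
  · rw [monClass_of_badXi h, map_zero]
  · rw [weylH_monClass_of_not_badXi h, homotopyMon_of_mem ha haS]

theorem weylH_monClass_add_single (ha : IsPivot S (e + Pi.single a 1) a) (haS : a ∉ S)
    (h : ¬badXi (e + Pi.single a 1)) :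
    weylH R N (monClass R S (e + Pi.single a 1)) = (-1 : R) ^ #S • monClass R (insert a S) e := by
  rw [weylH_monClass_of_not_badXi h, homotopyMon_add_single ha haS]

theorem weylH_monClass_of_isCocycleMon (hc : isCocycleMon (S, e)) :
    weylH R N (monClass R S e) = 0 := by
  by_cases hgood : badXi e
  · rw [monClass_of_badXi hgood, map_zero]
  rcases (pivots S e).eq_empty_or_nonempty with h | h
  · rw [weylH_monClass_of_not_badXi hgood, homotopyMon,
      dif_neg (Finset.not_nonempty_iff_eq_empty.2 h)]
  · obtain ⟨a, ha⟩ := exists_isPivot h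
    exact weylH_monClass_of_mem ha ((isCocycleMon_iff hgood ha).1 hc).1

theorem smul_monClass_add_weylH_mem_cocycleSpan (hgood : ¬badXi (u + Pi.single a 1))
    (ha : IsPivot S (u + Pi.single a 1) a) (haS : a ∉ S) (hb : b ∈ S) :
    (-1 : R) ^ #S • monClass R (insert a (S.erase b)) (u + Pi.single b 1) +
      weylH R N (monClass R (S.erase b) (u + Pi.single b 1 + Pi.single a 1)) ∈
      cocycleSpan R N := by
  by_cases hbad : badXi (u + Pi.single b 1 + Pi.single a 1)
  · rw [monClass_of_badXi hbad, map_zero, add_zero]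
    exact Submodule.smul_mem _ _
      (monClass_mem_cocycleSpan (isCocycleMon_insert_erase hgood ha haS hb hbad))
  · have hpiv : IsPivot (S.erase b) (u + Pi.single b 1 + Pi.single a 1) a := by
      rw [add_right_comm]
      exact ha.erase_add_single hb
    rw [weylH_monClass_add_single hpiv (fun h => haS (Finset.mem_of_mem_erase h)) hbad,
      ← add_smul, ← Finset.card_erase_add_one hb, pow_succ, mul_neg_one, neg_add_cancel,
      zero_smul]
    exact zero_mem _

end Homotopy

section Differential

variable (K : Type*) [Field K]

noncomputable def weylP (N : ℕ) : WModule K N →ₗ[K] WModule K N :=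
  LinearMap.id - weylD K N ∘ₗ weylH K N - weylH K N ∘ₗ weylD K N

variable {K}

theorem weylP_apply (x : WModule K N) :
    weylP K N x = x - weylD K N (weylH K N x) - weylH K N (weylD K N x) :=
  rfl

theorem weylD_monClass (S : Finset (Fin N)) (e : Fin N → ℕ) :
    weylD K N (monClass K S e) =
      ∑ b ∈ S, koszulSign K S b • monClass K (S.erase b) (e + Pi.single b 1) := by
  by_cases h : badXi e
  · rw [monClass_of_badXi h, map_zero]
    exact (Finset.sum_eq_zero fun b _ => by
      rw [monClass_of_badXi (badXi_mono le_self_add h), smul_zero]).symm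
  · rw [monClass, dif_pos h, weylD, Finsupp.lsum_single, LinearMap.toSpanSingleton_apply,
      one_smul, weylDMon]
    simp only [Function.update_add_eq_add_single]
    rfl

theorem weylD_weylD_monClass (S : Finset (Fin N)) (e : Fin N → ℕ) :
    weylD K N (weylD K N (monClass K S e)) = 0 := by
  rw [weylD_monClass, map_sum]
  simp only [map_smul, weylD_monClass, Finset.smul_sum, smul_smul]
  refine Finset.sum_sum_erase_eq_zero_of_antisymm S _ fun b hb b' hb' hne => ?_
  rw [koszulSign_mul_koszulSign_erase hb hb' hne, neg_smul, Finset.erase_right_comm,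
    add_right_comm e]

theorem weylD_weylD (x : WModule K N) : weylD K N (weylD K N x) = 0 := by
  induction x using Finsupp.induction_linear with
  | zero => rw [map_zero, map_zero]
  | add x y hx hy => rw [map_add, map_add, hx, hy, add_zero]
  | single m c =>
    rw [← Finsupp.smul_single_one, ← monClass_val, map_smul, map_smul, weylD_weylD_monClass,
      smul_zero]

theorem weylD_monClass_of_isCocycleMon (hc : isCocycleMon (S, e)) :
    weylD K N (monClass K S e) = 0 := by
  by_cases hgood : badXi e
  · rw [monClass_of_badXi hgood, map_zero]
  refine (weylD_monClass S e).trans (Finset.sum_eq_zero fun b hb => ?_)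
  obtain ⟨a, ha⟩ := exists_isPivot ⟨b, mem_pivots.2 (Or.inl hb)⟩
  have htot := ((isCocycleMon_iff hgood ha).1 hc).2
  refine (congrArg _ (monClass_of_badXi ⟨a + 1, Nat.le_add_left 1 a, a.isLt, ?_⟩)).trans
    (smul_zero _)
  change _ < prefixSum _ _
  rw [prefixSum_add_single, if_pos (Nat.lt_succ_of_le (ha.le_of_mem hb)), htot]
  exact Nat.lt_succ_self _

theorem weylP_monClass_eq_zero (hgood : ¬badXi e) (ha : IsPivot S e a) (haS : a ∈ S)
    (hc : ¬isCocycleMon (S, e)) : weylP K N (monClass K S e) = 0 := by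
  have hgood' := not_badXi_add_single_of_not_isCocycleMon hgood ha haS hc
  have hhd : weylH K N (weylD K N (monClass K S e)) = monClass K S e := by
    rw [weylD_monClass, map_sum, Finset.sum_eq_single_of_mem a haS]
    · rw [map_smul, weylH_monClass_add_single (ha.erase_add_single haS)
        (Finset.notMem_erase a S) hgood', Finset.insert_erase haS, smul_smul,
        koszulSign_of_forall_le haS fun j => ha.le_of_mem, ← pow_add,
        Even.neg_one_pow ⟨_, rfl⟩, one_smul]
    · intro b hb hba
      rw [map_smul, weylH_monClass_of_mem (ha.erase_add_single hb)
        (Finset.mem_erase.2 ⟨hba.symm, haS⟩), smul_zero]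
  rw [weylP_apply, weylH_monClass_of_mem ha haS, map_zero, sub_zero, hhd, sub_self]

theorem weylP_monClass_add_single_mem_cocycleSpan (hgood : ¬badXi (u + Pi.single a 1))
    (ha : IsPivot S (u + Pi.single a 1) a) (haS : a ∉ S) :
    weylP K N (monClass K S (u + Pi.single a 1)) ∈ cocycleSpan K N := by
  have hSa : ∀ j ∈ S, j < a := fun j hj => lt_of_le_of_ne (ha.le_of_mem hj) fun h => haS (h ▸ hj)
  have hdh : weylD K N (weylH K N (monClass K S (u + Pi.single a 1))) =
      monClass K S (u + Pi.single a 1) + ∑ b ∈ S, koszulSign K S b •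
        (-1 : K) ^ #S • monClass K (insert a (S.erase b)) (u + Pi.single b 1) := by
    rw [weylH_monClass_add_single ha haS hgood, map_smul, weylD_monClass, Finset.sum_insert haS,
      Finset.erase_insert haS, koszulSign_insert_self hSa, smul_add, smul_smul, ← pow_add,
      Even.neg_one_pow ⟨_, rfl⟩, one_smul, Finset.smul_sum]
    congr 1
    refine Finset.sum_congr rfl fun b hb => ?_
    rw [koszulSign_insert_of_lt (hSa b hb), Finset.erase_insert_of_ne (hSa b hb).ne', smul_comm]
  have hhd : weylH K N (weylD K N (monClass K S (u + Pi.single a 1))) =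
      ∑ b ∈ S, koszulSign K S b •
        weylH K N (monClass K (S.erase b) (u + Pi.single b 1 + Pi.single a 1)) := by
    simp only [weylD_monClass, map_sum, map_smul, add_right_comm u (Pi.single a 1)]
  rw [weylP_apply, hdh, hhd, sub_add_cancel_left, ← neg_add', ← Finset.sum_add_distrib]
  refine neg_mem (Submodule.sum_mem _ fun b hb => ?_)
  rw [← smul_add]
  exact Submodule.smul_mem _ _ (smul_monClass_add_weylH_mem_cocycleSpan hgood ha haS hb)

theorem weylP_monClass_mem_cocycleSpan (S : Finset (Fin N)) (e : Fin N → ℕ) :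
    weylP K N (monClass K S e) ∈ cocycleSpan K N := by
  by_cases hgood : badXi e
  · rw [monClass_of_badXi hgood, map_zero]
    exact zero_mem _
  by_cases hc : isCocycleMon (S, e)
  · rw [weylP_apply, weylH_monClass_of_isCocycleMon hc, weylD_monClass_of_isCocycleMon hc,
      map_zero, map_zero, sub_zero, sub_zero]
    exact monClass_mem_cocycleSpan fun _ => hc
  obtain ⟨a, ha⟩ := exists_isPivot
    (Finset.nonempty_iff_ne_empty.2 fun h => hc (isCocycleMon_of_pivots_eq_empty h))
  by_cases haS : a ∈ S
  · rw [weylP_monClass_eq_zero hgood ha haS hc]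
    exact zero_mem _
  · obtain ⟨u, rfl⟩ := exists_eq_add_single ((mem_pivots.1 ha.1).resolve_left haS)
    exact weylP_monClass_add_single_mem_cocycleSpan hgood ha haS

theorem weylP_mem_cocycleSpan (x : WModule K N) : weylP K N x ∈ cocycleSpan K N := by
  change x ∈ (cocycleSpan K N).comap (weylP K N)
  induction x using Finsupp.induction_linear with
  | zero => exact zero_mem _
  | add x y hx hy => exact add_mem hx hy
  | single m c =>
    rw [← Finsupp.smul_single_one, ← monClass_val]
    exact Submodule.smul_mem _ c (weylP_monClass_mem_cocycleSpan _ _)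

end Differential

end WeylTruncated

/-- the classes of the monomials
`ζ_{α₁}⋯ζ_{α_s} ξ₁^{i₁}⋯ξ_{α_s}^{i_{α_s}}` with `i₁+⋯+i_k ≤ k` for `k ≤ α_s` and
`i₁+⋯+i_{α_s} = α_s`, together with the class of `1`, form a basis of the
cohomology of `(R/I, d = Σ ξᵢ ∂/∂ζᵢ)`. -/
theorem weyl_truncated_cohomology_basis (N : ℕ) :
    ∃ v : {m : GoodMon N // isCocycleMon m.1} → LinearMap.ker (weylD k N),
      (∀ x, ((v x : WModule k N)) = Finsupp.single x.1 (1 : k)) ∧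
      ∃ b : Module.Basis {m : GoodMon N // isCocycleMon m.1} k (WeylCohomology k N),
        ∀ x, b x = Submodule.Quotient.mk (v x) := by
  open WeylTruncated in
  obtain ⟨b, hb⟩ := exists_basis_homology_of_homotopy_retract (h := weylH k N)
    (f := fun x : {m : GoodMon N // isCocycleMon m.1} => Finsupp.single x.1 1) weylD_weylD
    ((Finsupp.linearIndependent_single_one k _).comp Subtype.val Subtype.val_injective)
    (fun x => by rw [← monClass_val]; exact weylD_monClass_of_isCocycleMon x.2)
    (fun x => by rw [← monClass_val, weylH_monClass_of_isCocycleMon x.2, map_zero])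
    weylP_mem_cocycleSpan
  exact ⟨_, fun x => rfl, b, hb⟩
end
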